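/- Let a be uniform on chunk S_i = p⁻¹(i), with p, p* valid partitionings, and define the potential change ΔΦ_a of moving a from chunk i to chunk i+1 by: ΔΦ_a = β·2^i if p*(a) ≤ i − κ − 1; ΔΦ_a ≤ β·2^{i+1} if p*(a) = i − κ; and ΔΦ_a = 0 if p*(a) ≥ i − κ + 1. If β ≤ 2^κ, then E[ΔΦ_a] ≤ β·2^{i+1}·2^{−κ+1} ≤ 2^{i+2}. -/
import Mathlib


/-- Let `a` be uniform on the chunk `S_i = p⁻¹(i)` where `p, p*` are valid
partitionings.  Suppose the potential change `ΔΦ` of moving an element from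
chunk `i` to chunk `i+1` satisfies: `ΔΦ a = β·2^i` if `p*(a) ≤ i − κ − 1`;
`ΔΦ a ≤ β·2^{i+1}` if `p*(a) = i − κ`; and `ΔΦ a = 0` if `p*(a) ≥ i − κ + 1`.
If `0 < β ≤ 2^κ`, then `E[ΔΦ_a] ≤ β·2^{i+1}·2^{−κ+1} ≤ 2^{i+2}`. -/
theorem stmt_8 {U : Type*} [Fintype U] [DecidableEq U] (w : ℕ) (hw : 2 ≤ w)
    (hcard : Fintype.card U = 2 ^ w - 1)
    (p pstar : U → ℕ)
    (hpran : ∀ x, p x < w) (hpsran : ∀ x, pstar x < w)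
    (hp : ∀ j < w, (Finset.univ.filter (fun x => p x = j)).card = 2 ^ j)
    (hps : ∀ j < w, (Finset.univ.filter (fun x => pstar x = j)).card = 2 ^ j)
    (i : ℕ) (hi : i ≤ w - 2) (κ : ℕ) (hκ : 1 ≤ κ)
    (β : ℝ) (hβ0 : 0 < β) (hβκ : β ≤ 2 ^ κ)
    (ΔΦ : U → ℝ)
    (hcase1 : ∀ a, p a = i → (pstar a : ℤ) ≤ (i : ℤ) - κ - 1 → ΔΦ a = β * 2 ^ i)
    (hcase2 : ∀ a, p a = i → (pstar a : ℤ) = (i : ℤ) - κ → ΔΦ a ≤ β * 2 ^ (i + 1))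
    (hcase3 : ∀ a, p a = i → (i : ℤ) - κ + 1 ≤ (pstar a : ℤ) → ΔΦ a = 0) :
    (∑ a ∈ Finset.univ.filter (fun x => p x = i), ΔΦ a)
        / ((Finset.univ.filter (fun x => p x = i)).card : ℝ)
      ≤ β * 2 ^ (i + 1) * (2 : ℝ) ^ (-(κ : ℤ) + 1)
    ∧ β * 2 ^ (i + 1) * (2 : ℝ) ^ (-(κ : ℤ) + 1) ≤ 2 ^ (i + 2) := by

  have hiw : i < w := by omega
  have hpow : (2:ℝ) ^ (-(κ : ℤ) + 1) = 2 / 2 ^ κ := by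
    rw [zpow_add₀ (by norm_num : (2:ℝ) ≠ 0), zpow_neg, zpow_natCast, zpow_one]
    ring
  have hκpos : (0:ℝ) < 2 ^ κ := by positivity
  constructor
  · set S := Finset.univ.filter (fun x => p x = i) with hS
    have hScard : (S.card : ℝ) = 2 ^ i := by
      rw [hS, hp i hiw]; push_cast; ring
    have hSpos : (0:ℝ) < (S.card : ℝ) := by rw [hScard]; positivity
    -- pointwise bound by indicator
    have hpt : ∀ a ∈ S, ΔΦ a ≤
        (if (pstar a : ℤ) ≤ (i:ℤ) - κ then β * 2 ^ (i+1) else 0) := by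
      intro a ha
      have hpa : p a = i := by simpa [hS] using ha
      rcases lt_trichotomy ((pstar a : ℤ)) ((i:ℤ) - κ) with h | h | h
      · have : ΔΦ a = β * 2 ^ i := hcase1 a hpa (by omega)
        rw [if_pos (by omega), this]
        have : (2:ℝ)^i ≤ 2^(i+1) := by
          apply pow_le_pow_right₀ (by norm_num) (by omega)
        nlinarith
      · rw [if_pos (by omega)]; exact hcase2 a hpa h
      · have : ΔΦ a = 0 := hcase3 a hpa (by omega)
        rw [if_neg (by omega), this]
    have hsum1 : ∑ a ∈ S, ΔΦ a ≤
        ∑ a ∈ S, (if (pstar a : ℤ) ≤ (i:ℤ) - κ then β * 2 ^ (i+1) else 0) :=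
      Finset.sum_le_sum hpt
    have hsum2 : ∑ a ∈ S, (if (pstar a : ℤ) ≤ (i:ℤ) - κ then β * 2 ^ (i+1) else 0)
        = ((S.filter (fun a => (pstar a : ℤ) ≤ (i:ℤ) - κ)).card : ℝ) * (β * 2 ^ (i+1)) := by
      rw [← Finset.sum_filter, Finset.sum_const, nsmul_eq_mul]
    -- bound the count
    have hcount : ((S.filter (fun a => (pstar a : ℤ) ≤ (i:ℤ) - κ)).card : ℝ) * 2 ^ κ
        ≤ 2 ^ (i + 1) := by
      by_cases hki : κ ≤ i
      · set m := i - κ with hm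
        have hsub : S.filter (fun a => (pstar a : ℤ) ≤ (i:ℤ) - κ) ⊆
            (Finset.range (m+1)).biUnion (fun j => Finset.univ.filter (fun x => pstar x = j)) := by
          intro a ha
          simp only [Finset.mem_filter, Finset.mem_biUnion, Finset.mem_range,
            Finset.mem_univ, true_and] at ha ⊢
          exact ⟨pstar a, by omega, rfl⟩
        have hbu : ((Finset.range (m+1)).biUnion
            (fun j => Finset.univ.filter (fun x => pstar x = j))).card ≤ 2 ^ (m+1) - 1 := by
          calc _ ≤ ∑ j ∈ Finset.range (m+1), (Finset.univ.filter (fun x => pstar x = j)).card :=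
                Finset.card_biUnion_le
            _ = ∑ j ∈ Finset.range (m+1), 2 ^ j := by
                apply Finset.sum_congr rfl
                intro j hj
                exact hps j (by simp at hj; omega)
            _ = 2 ^ (m+1) - 1 := by
                induction (m+1) with
                | zero => simp
                | succ n ih =>
                    rw [Finset.sum_range_succ, ih, pow_succ]
                    have : 1 ≤ 2 ^ n := Nat.one_le_two_pow
                    omega
        have hc : (S.filter (fun a => (pstar a : ℤ) ≤ (i:ℤ) - κ)).card ≤ 2 ^ (m+1) :=
          le_trans (le_trans (Finset.card_le_card hsub) hbu) (Nat.sub_le _ _)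
        have hc' : ((S.filter (fun a => (pstar a : ℤ) ≤ (i:ℤ) - κ)).card : ℝ) ≤ 2 ^ (m+1) := by
          exact_mod_cast le_trans hc (le_refl _)
        have hmul : (2:ℝ) ^ (m+1) * 2 ^ κ = 2 ^ (i+1) := by
          rw [← pow_add]; congr 1; omega
        nlinarith [hκpos]
      · have : S.filter (fun a => (pstar a : ℤ) ≤ (i:ℤ) - κ) = ∅ := by
          apply Finset.filter_false_of_mem
          intro a _
          omega
        rw [this]
        simp
    rw [div_le_iff₀ hSpos, hpow, hScard]
    calc ∑ a ∈ S, ΔΦ a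
        ≤ ((S.filter (fun a => (pstar a : ℤ) ≤ (i:ℤ) - κ)).card : ℝ) * (β * 2 ^ (i+1)) := by
          rw [← hsum2]; exact hsum1
      _ ≤ β * 2 ^ (i + 1) * (2 / 2 ^ κ) * 2 ^ i := by
          have heq : β * 2 ^ (i + 1) * (2 / 2 ^ κ) * 2 ^ i
              = β * 2 ^ (i + 1) * 2 * 2 ^ i / 2 ^ κ := by ring
          rw [heq, le_div_iff₀ hκpos]
          have h2 : β * 2 ^ (i + 1) * 2 * 2 ^ i = β * 2 ^ (i+1) * 2 ^ (i+1) := by ring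
          rw [h2]
          have hb : (0:ℝ) ≤ β * 2 ^ (i+1) := by positivity
          calc ((S.filter (fun a => (pstar a : ℤ) ≤ (i:ℤ) - κ)).card : ℝ) * (β * 2 ^ (i+1)) * 2 ^ κ
              = (((S.filter (fun a => (pstar a : ℤ) ≤ (i:ℤ) - κ)).card : ℝ) * 2 ^ κ) * (β * 2 ^ (i+1)) := by ring
            _ ≤ 2 ^ (i+1) * (β * 2 ^ (i+1)) := by
                exact mul_le_mul_of_nonneg_right hcount hb
            _ = β * 2 ^ (i+1) * 2 ^ (i+1) := by ring
  · rw [hpow]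
    have heq : β * 2 ^ (i + 1) * (2 / 2 ^ κ) = β * 2 ^ (i + 1) * 2 / 2 ^ κ := by ring
    rw [heq, div_le_iff₀ hκpos]
    have : (2:ℝ)^(i+2) = 2^(i+1) * 2 := by rw [pow_succ]
    nlinarith [pow_pos (show (0:ℝ)<2 by norm_num) (i+1)]
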